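/- arXiv:1712.06789 — 3 statements merged into one kernel-verified Lean document; each statement's English description precedes it below -/
import Mathlib

section
/- Let P = U D U* with U unitary and D = diag(λ₁²,…,λₙ²), λ_i > 0, and let N be an n×n complex matrix and ρ > 0 with μ_i² := λ_i² − ρ² > 0 for all i. Then N P̄⁻¹ N* = U diag(μ₁²,…,μₙ²) U* holds if and only if there exists a unitary matrix X with N = U diag(μ₁,…,μₙ) X diag(λ₁,…,λₙ) ᵗU (where P̄ denotes the entrywise complex conjugate and ᵗU the transpose). -/
open Matrix

/-- With `P = U diag(λ²) U*`, `μ_i² = λ_i² - ρ² > 0`, one has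
`N P̄⁻¹ N* = U diag(μ²) U*` iff `N = U diag(μ) X diag(λ) ᵗU` for some unitary `X`. -/
theorem stmt3 (n : ℕ) (U N : Matrix (Fin n) (Fin n) ℂ)
    (hU : U ∈ Matrix.unitaryGroup (Fin n) ℂ)
    (lam mu : Fin n → ℝ) (ρ : ℝ) (hρ : 0 < ρ)
    (hlam : ∀ i, 0 < lam i) (hmu : ∀ i, 0 < mu i)
    (hmu2 : ∀ i, (mu i) ^ 2 = (lam i) ^ 2 - ρ ^ 2)
    (P : Matrix (Fin n) (Fin n) ℂ)
    (hP : P = U * Matrix.diagonal (fun i => ((lam i : ℂ) ^ 2)) * Uᴴ) :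
    N * (P.map (starRingEnd ℂ))⁻¹ * Nᴴ
        = U * Matrix.diagonal (fun i => ((mu i : ℂ) ^ 2)) * Uᴴ
      ↔ ∃ X ∈ Matrix.unitaryGroup (Fin n) ℂ,
          N = U * Matrix.diagonal (fun i => (mu i : ℂ)) * X
                * Matrix.diagonal (fun i => (lam i : ℂ)) * Uᵀ := by
  set c := starRingEnd ℂ with hc
  set V : Matrix (Fin n) (Fin n) ℂ := U.map c with hV
  have hlamne : ∀ i, (lam i : ℂ) ≠ 0 := fun i =>
    Complex.ofReal_ne_zero.mpr (ne_of_gt (hlam i))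
  have hmune : ∀ i, (mu i : ℂ) ≠ 0 := fun i =>
    Complex.ofReal_ne_zero.mpr (ne_of_gt (hmu i))
  have hUV : U * Uᴴ = 1 := by
    simpa [Matrix.star_eq_conjTranspose] using (Matrix.mem_unitaryGroup_iff.mp hU)
  have hVU : Uᴴ * U = 1 := by
    simpa [Matrix.star_eq_conjTranspose] using (Matrix.mem_unitaryGroup_iff'.mp hU)
  have hmapH : (Uᴴ).map c = Uᵀ := by
    ext i j
    simp [Matrix.conjTranspose_apply, hc]
  have hVT : V * Uᵀ = 1 := by
    have := congrArg (fun A => A.map c) hUV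
    simpa [Matrix.map_mul, hmapH, Matrix.map_one c (map_zero c) (map_one c), hV] using this
  have hTV : Uᵀ * V = 1 := by
    have := congrArg (fun A => A.map c) hVU
    simpa [Matrix.map_mul, hmapH, Matrix.map_one c (map_zero c) (map_one c), hV] using this
  -- conjTranspose facts
  have hVH : Vᴴ = Uᵀ := by
    ext i j
    simp [hV, Matrix.conjTranspose_apply, hc]
  have hTH : (Uᵀ)ᴴ = V := by
    ext i j
    simp [hV, Matrix.conjTranspose_apply, hc]
  have hdiagH : ∀ r : Fin n → ℂ, (∀ i, (starRingEnd ℂ) (r i) = r i) →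
      (Matrix.diagonal r)ᴴ = Matrix.diagonal r := by
    intro r hr
    ext i j
    rcases eq_or_ne i j with rfl | hij
    · simpa [Matrix.conjTranspose_apply] using hr i
    · simp [Matrix.conjTranspose_apply, Matrix.diagonal_apply_ne _ hij,
        Matrix.diagonal_apply_ne _ (Ne.symm hij)]
  -- cancellation lemmas (right-associated)
  have cUV : ∀ A : Matrix (Fin n) (Fin n) ℂ, U * (Uᴴ * A) = A := fun A => by
    rw [← Matrix.mul_assoc, hUV, Matrix.one_mul]
  have cVU : ∀ A : Matrix (Fin n) (Fin n) ℂ, Uᴴ * (U * A) = A := fun A => by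
    rw [← Matrix.mul_assoc, hVU, Matrix.one_mul]
  have cVT : ∀ A : Matrix (Fin n) (Fin n) ℂ, V * (Uᵀ * A) = A := fun A => by
    rw [← Matrix.mul_assoc, hVT, Matrix.one_mul]
  have cTV : ∀ A : Matrix (Fin n) (Fin n) ℂ, Uᵀ * (V * A) = A := fun A => by
    rw [← Matrix.mul_assoc, hTV, Matrix.one_mul]
  have cD : ∀ (d e : Fin n → ℂ) (A : Matrix (Fin n) (Fin n) ℂ),
      Matrix.diagonal d * (Matrix.diagonal e * A) = Matrix.diagonal (fun i => d i * e i) * A :=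
    fun d e A => by rw [← Matrix.mul_assoc, Matrix.diagonal_mul_diagonal]
  -- P̄ and its inverse
  have hPm : P.map c = V * Matrix.diagonal (fun i => ((lam i : ℂ) ^ 2)) * Uᵀ := by
    rw [hP, Matrix.map_mul, Matrix.map_mul, hmapH]
    congr 2
    rw [Matrix.diagonal_map (map_zero c)]
    funext i
    simp [hc]
  have hPinv : (P.map c)⁻¹ = V * Matrix.diagonal (fun i => ((lam i : ℂ) ^ 2)⁻¹) * Uᵀ := by
    apply Matrix.inv_eq_right_inv
    rw [hPm]
    simp only [Matrix.mul_assoc]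
    rw [cTV, cD]
    have h1 : (fun i => (lam i : ℂ) ^ 2 * ((lam i : ℂ) ^ 2)⁻¹) = fun _ => (1 : ℂ) := by
      funext i
      exact mul_inv_cancel₀ (pow_ne_zero 2 (hlamne i))
    rw [h1, Matrix.diagonal_one, Matrix.one_mul, hVT]
  constructor
  · -- forward
    intro h
    set X : Matrix (Fin n) (Fin n) ℂ :=
      Matrix.diagonal (fun i => ((mu i : ℂ))⁻¹) * Uᴴ * N * V
        * Matrix.diagonal (fun i => ((lam i : ℂ))⁻¹) with hX
    have hXH : Xᴴ = Matrix.diagonal (fun i => ((lam i : ℂ))⁻¹) * Uᵀ * Nᴴ * U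
        * Matrix.diagonal (fun i => ((mu i : ℂ))⁻¹) := by
      rw [hX]
      simp only [Matrix.conjTranspose_mul, Matrix.conjTranspose_conjTranspose, hVH]
      rw [hdiagH _ (fun i => by simp), hdiagH _ (fun i => by simp)]
      simp only [Matrix.mul_assoc]
    have hNQ : N * (V * (Matrix.diagonal (fun i => ((lam i : ℂ) ^ 2)⁻¹) * (Uᵀ * Nᴴ)))
        = U * (Matrix.diagonal (fun i => ((mu i : ℂ) ^ 2)) * Uᴴ) := by
      have := h
      rw [hPinv] at this
      simpa only [Matrix.mul_assoc] using this
    have hXunit : X ∈ Matrix.unitaryGroup (Fin n) ℂ := by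
      rw [Matrix.mem_unitaryGroup_iff, Matrix.star_eq_conjTranspose, hXH, hX]
      have hNQ' : ∀ A : Matrix (Fin n) (Fin n) ℂ,
          N * (V * ((Matrix.diagonal fun i => ((lam i : ℂ) ^ 2)⁻¹) * (Uᵀ * (Nᴴ * A))))
          = U * ((Matrix.diagonal fun i => ((mu i : ℂ) ^ 2)) * (Uᴴ * A)) := by
        intro A
        have := congrArg (fun B => B * A) hNQ
        simpa only [Matrix.mul_assoc] using this
      simp only [Matrix.mul_assoc, cD]
      rw [show (fun i => ((lam i : ℂ))⁻¹ * ((lam i : ℂ))⁻¹)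
            = fun i => ((lam i : ℂ) ^ 2)⁻¹ from funext fun i => by rw [← mul_inv, sq]]
      rw [hNQ']
      simp only [cVU, Matrix.diagonal_mul_diagonal]
      rw [show (fun i => ((mu i : ℂ))⁻¹ * ((mu i : ℂ) ^ 2 * ((mu i : ℂ))⁻¹))
            = fun _ => (1 : ℂ) from funext fun i => by
          rw [sq, mul_inv_cancel_right₀ (hmune i), inv_mul_cancel₀ (hmune i)],
        Matrix.diagonal_one]
    refine ⟨X, hXunit, ?_⟩
    rw [hX]
    simp only [Matrix.mul_assoc, cD]
    rw [show (fun i => (mu i : ℂ) * ((mu i : ℂ))⁻¹) = fun _ => (1 : ℂ) from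
        funext fun i => mul_inv_cancel₀ (hmune i),
      show (fun i => ((lam i : ℂ))⁻¹ * (lam i : ℂ)) = fun _ => (1 : ℂ) from
        funext fun i => inv_mul_cancel₀ (hlamne i)]
    simp only [Matrix.diagonal_one, Matrix.one_mul]
    rw [cUV, hVT, Matrix.mul_one]
  · -- backward
    intro ⟨X, hXu, hN⟩
    have hXX : X * Xᴴ = 1 := by
      simpa [Matrix.star_eq_conjTranspose] using Matrix.mem_unitaryGroup_iff.mp hXu
    have hNH : Nᴴ = V * (Matrix.diagonal (fun i => (lam i : ℂ)) * (Xᴴ *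
        (Matrix.diagonal (fun i => (mu i : ℂ)) * Uᴴ))) := by
      rw [hN]
      simp only [Matrix.conjTranspose_mul, hTH,
        hdiagH (fun i => ((lam i : ℂ))) (fun i => by simp),
        hdiagH (fun i => ((mu i : ℂ))) (fun i => by simp), Matrix.mul_assoc]
    rw [hPinv, hNH, hN]
    simp only [Matrix.mul_assoc, cTV, cD]
    have cXX : ∀ A : Matrix (Fin n) (Fin n) ℂ, X * (Xᴴ * A) = A := fun A => by
      rw [← Matrix.mul_assoc, hXX, Matrix.one_mul]
    rw [show (fun i => (lam i : ℂ) * ((lam i : ℂ) ^ 2)⁻¹ * (lam i : ℂ))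
          = fun _ => (1 : ℂ) from funext fun i => by
        have h := hlamne i
        field_simp, Matrix.diagonal_one, Matrix.one_mul, cXX, cD,
      show (fun i => (mu i : ℂ) * (mu i : ℂ)) = fun i => (mu i : ℂ) ^ 2 from
        funext fun i => (sq _).symm]
end

section
/- With U unitary, positive reals λ_i, μ_i, and X unitary, the matrix N = U diag(μ₁,…,μₙ) X diag(λ₁,…,λₙ) ᵗU is symmetric (ᵗN = N) if and only if ᵗX · diag(μ₁/λ₁,…,μₙ/λₙ) = diag(μ₁/λ₁,…,μₙ/λₙ) · X. -/
open Matrix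

/-- `N = U diag(μ) X diag(λ) ᵗU` is symmetric iff
`ᵗX diag(μ/λ) = diag(μ/λ) X`. -/
theorem stmt4 (n : ℕ) (U X : Matrix (Fin n) (Fin n) ℂ)
    (hU : U ∈ Matrix.unitaryGroup (Fin n) ℂ)
    (hX : X ∈ Matrix.unitaryGroup (Fin n) ℂ)
    (lam mu : Fin n → ℝ) (hlam : ∀ i, 0 < lam i) (hmu : ∀ i, 0 < mu i) :
    (U * Matrix.diagonal (fun i => (mu i : ℂ)) * X
        * Matrix.diagonal (fun i => (lam i : ℂ)) * Uᵀ)ᵀ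
      = U * Matrix.diagonal (fun i => (mu i : ℂ)) * X
        * Matrix.diagonal (fun i => (lam i : ℂ)) * Uᵀ
    ↔ Xᵀ * Matrix.diagonal (fun i => (mu i / lam i : ℂ))
        = Matrix.diagonal (fun i => (mu i / lam i : ℂ)) * X := by
  have hUu : IsUnit U := ⟨Unitary.toUnits ⟨U, hU⟩, rfl⟩
  have hUTu : IsUnit Uᵀ := by
    rw [Matrix.isUnit_iff_isUnit_det, Matrix.det_transpose,
      ← Matrix.isUnit_iff_isUnit_det]
    exact hUu
  have hlam' : ∀ i, (lam i : ℂ) ≠ 0 := fun i => by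
    exact_mod_cast Complex.ofReal_ne_zero.mpr (hlam i).ne'
  have key : ∀ i j : Fin n,
      ((lam i : ℂ) * X j i * (mu j : ℂ) = (mu i : ℂ) * X i j * (lam j : ℂ)) ↔
      (X j i * ((mu j : ℂ) / (lam j : ℂ)) = ((mu i : ℂ) / (lam i : ℂ)) * X i j) := by
    intro i j
    constructor
    · intro e
      field_simp [hlam' i, hlam' j]
      linear_combination e
    · intro e
      field_simp [hlam' i, hlam' j] at e
      linear_combination e
  constructor
  · intro h
    have h1 : Matrix.diagonal (fun i => (lam i : ℂ)) * Xᵀ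
        * Matrix.diagonal (fun i => (mu i : ℂ)) =
        Matrix.diagonal (fun i => (mu i : ℂ)) * X
        * Matrix.diagonal (fun i => (lam i : ℂ)) := by
      apply hUu.mul_left_cancel
      apply hUTu.mul_right_cancel
      calc U * (Matrix.diagonal (fun i => (lam i : ℂ)) * Xᵀ
            * Matrix.diagonal (fun i => (mu i : ℂ))) * Uᵀ
          = (U * Matrix.diagonal (fun i => (mu i : ℂ)) * X
            * Matrix.diagonal (fun i => (lam i : ℂ)) * Uᵀ)ᵀ := by
            simp [Matrix.transpose_mul, Matrix.diagonal_transpose, mul_assoc]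
        _ = U * Matrix.diagonal (fun i => (mu i : ℂ)) * X
            * Matrix.diagonal (fun i => (lam i : ℂ)) * Uᵀ := h
        _ = U * (Matrix.diagonal (fun i => (mu i : ℂ)) * X
            * Matrix.diagonal (fun i => (lam i : ℂ))) * Uᵀ := by
            simp [mul_assoc]
    ext i j
    have h2 := Matrix.ext_iff.mpr h1 i j
    simp only [Matrix.mul_diagonal, Matrix.diagonal_mul,
      Matrix.transpose_apply] at h2 ⊢
    exact (key i j).mp h2
  · intro h
    have h1 : Matrix.diagonal (fun i => (lam i : ℂ)) * Xᵀ
        * Matrix.diagonal (fun i => (mu i : ℂ)) =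
        Matrix.diagonal (fun i => (mu i : ℂ)) * X
        * Matrix.diagonal (fun i => (lam i : ℂ)) := by
      ext i j
      have h2 := Matrix.ext_iff.mpr h i j
      simp only [Matrix.mul_diagonal, Matrix.diagonal_mul,
        Matrix.transpose_apply] at h2 ⊢
      exact (key i j).mpr h2
    calc (U * Matrix.diagonal (fun i => (mu i : ℂ)) * X
            * Matrix.diagonal (fun i => (lam i : ℂ)) * Uᵀ)ᵀ
        = U * (Matrix.diagonal (fun i => (lam i : ℂ)) * Xᵀ
            * Matrix.diagonal (fun i => (mu i : ℂ))) * Uᵀ := by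
          simp [Matrix.transpose_mul, Matrix.diagonal_transpose, mul_assoc]
      _ = U * (Matrix.diagonal (fun i => (mu i : ℂ)) * X
            * Matrix.diagonal (fun i => (lam i : ℂ))) * Uᵀ := by rw [h1]
      _ = _ := by simp [mul_assoc]
end

section
/- Let U be an n×n unitary matrix, λ_i ≥ μ_i ≥ 0 real numbers with ρ² := λ_i² − μ_i² independent of i and ρ > 0, and X unitary. Then for every z ∈ ℂⁿ, 2⟨z, U diag(λ₁²,…,λₙ²) U* z̄⟩ + 2 Re⟨z, U diag(μ₁,…,μₙ) X diag(λ₁,…,λₙ) ᵗU z⟩ ≥ ρ² |z|², where ⟨z,w⟩ = Σ z_i w_i and |z|² = Σ z_i z̄_i. -/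
open Matrix

/-- coercivity estimate
`2⟨z, U diag(λ²) U* z̄⟩ + 2 Re⟨z, U diag(μ) X diag(λ) ᵗU z⟩ ≥ ρ² |z|²`. -/
theorem stmt6 (n : ℕ) (U X : Matrix (Fin n) (Fin n) ℂ)
    (hU : U ∈ Matrix.unitaryGroup (Fin n) ℂ)
    (hX : X ∈ Matrix.unitaryGroup (Fin n) ℂ)
    (lam mu : Fin n → ℝ) (ρ : ℝ) (hρ : 0 < ρ)
    (hlam : ∀ i, 0 < lam i) (hmu : ∀ i, 0 ≤ mu i)
    (hrel : ∀ i, (lam i) ^ 2 - (mu i) ^ 2 = ρ ^ 2)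
    (z : Fin n → ℂ) :
    2 * (∑ i, z i *
          ((U * Matrix.diagonal (fun i => (lam i : ℂ) ^ 2) * Uᴴ).mulVec (star z)) i).re
      + 2 * (∑ i, z i *
          ((U * Matrix.diagonal (fun i => (mu i : ℂ)) * X
            * Matrix.diagonal (fun i => (lam i : ℂ)) * Uᵀ).mulVec z) i).re
      ≥ ρ ^ 2 * ∑ i, Complex.normSq (z i) := by
  classical
  have hUU : U * Uᴴ = 1 := by
    simpa [Matrix.star_eq_conjTranspose] using hU.2
  have hXX : Xᴴ * X = 1 := by
    simpa [Matrix.star_eq_conjTranspose] using hX.1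
  have hns : ∀ c : ℂ, Complex.normSq (star c) = Complex.normSq c := fun c => by
    rw [Complex.star_def]; exact Complex.normSq_conj c
  have hcm : ∀ c : ℂ, star c * c = (Complex.normSq c : ℂ) := fun c => by
    rw [Complex.star_def]; exact Complex.normSq_eq_conj_mul_self.symm
  set w : Fin n → ℂ := Uᴴ *ᵥ (star z) with hw
  have hsw : z ᵥ* U = star w := by
    rw [hw, Matrix.star_mulVec, Matrix.conjTranspose_conjTranspose, star_star]
  set s : Fin n → ℂ := star w with hs
  set t : Fin n → ℂ := fun i => (lam i : ℂ) * s i with ht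
  set u : Fin n → ℂ := X *ᵥ t with hu
  -- Term 1 rewrite
  have hT1 : (∑ i, z i *
      ((U * Matrix.diagonal (fun i => (lam i : ℂ) ^ 2) * Uᴴ) *ᵥ (star z)) i)
      = ∑ i, s i * ((lam i : ℂ) ^ 2 * w i) := by
    show z ⬝ᵥ ((U * Matrix.diagonal (fun i => (lam i : ℂ) ^ 2) * Uᴴ) *ᵥ (star z)) = _
    rw [← Matrix.mulVec_mulVec, ← Matrix.mulVec_mulVec, ← hw,
      Matrix.dotProduct_mulVec, hsw]
    simp [dotProduct, Matrix.mulVec_diagonal]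
  -- Term 2 rewrite
  have hT2 : (∑ i, z i *
      ((U * Matrix.diagonal (fun i => (mu i : ℂ)) * X
        * Matrix.diagonal (fun i => (lam i : ℂ)) * Uᵀ) *ᵥ z) i)
      = ∑ i, s i * ((mu i : ℂ) * u i) := by
    have h1 : Uᵀ *ᵥ z = s := by rw [Matrix.mulVec_transpose, hsw]
    have h2 : Matrix.diagonal (fun i => (lam i : ℂ)) *ᵥ s = t := by
      funext i; simp [Matrix.mulVec_diagonal, ht]
    show z ⬝ᵥ ((U * Matrix.diagonal (fun i => (mu i : ℂ)) * X
        * Matrix.diagonal (fun i => (lam i : ℂ)) * Uᵀ) *ᵥ z) = _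
    rw [← Matrix.mulVec_mulVec, ← Matrix.mulVec_mulVec, ← Matrix.mulVec_mulVec,
      ← Matrix.mulVec_mulVec, h1, h2, ← hu, Matrix.dotProduct_mulVec, hsw]
    simp [dotProduct, Matrix.mulVec_diagonal]
  -- normSq of t entries
  have hts : ∀ i, Complex.normSq (t i) = (lam i) ^ 2 * Complex.normSq (w i) := by
    intro i
    rw [show t i = (lam i : ℂ) * (star (w i)) from by simp [ht, hs],
      Complex.normSq_mul, Complex.normSq_ofReal, hns]
    ring
  -- norm preservation for u
  have hnorm_u : ∑ i, Complex.normSq (u i) = ∑ i, (lam i) ^ 2 * Complex.normSq (w i) := by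
    have h1 : star u ⬝ᵥ u = star t ⬝ᵥ t := by
      rw [hu, Matrix.star_mulVec, Matrix.dotProduct_mulVec, Matrix.vecMul_vecMul, hXX,
        Matrix.vecMul_one]
    have h2 := congrArg Complex.re h1
    have e1 : (star u ⬝ᵥ u).re = ∑ i, Complex.normSq (u i) := by
      simp only [dotProduct, Complex.re_sum, Pi.star_apply]
      exact Finset.sum_congr rfl fun i _ => by rw [hcm, Complex.ofReal_re]
    have e2 : (star t ⬝ᵥ t).re = ∑ i, (lam i) ^ 2 * Complex.normSq (w i) := by
      simp only [dotProduct, Complex.re_sum, Pi.star_apply]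
      exact Finset.sum_congr rfl fun i _ => by rw [hcm, Complex.ofReal_re, hts i]
    rw [← e1, h2, e2]
  -- norm preservation for w
  have hnorm_w : ∑ i, Complex.normSq (w i) = ∑ i, Complex.normSq (z i) := by
    have h1 : s ⬝ᵥ w = z ⬝ᵥ star z := by
      rw [← hsw, hw, Matrix.dotProduct_mulVec, Matrix.vecMul_vecMul, hUU, Matrix.vecMul_one]
    have h2 := congrArg Complex.re h1
    have e1 : (s ⬝ᵥ w).re = ∑ i, Complex.normSq (w i) := by
      simp only [dotProduct, Complex.re_sum, hs, Pi.star_apply]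
      exact Finset.sum_congr rfl fun i _ => by rw [hcm, Complex.ofReal_re]
    have e2 : (z ⬝ᵥ star z).re = ∑ i, Complex.normSq (z i) := by
      simp only [dotProduct, Complex.re_sum, Pi.star_apply]
      refine Finset.sum_congr rfl fun i _ => ?_
      rw [mul_comm, hcm, Complex.ofReal_re]
    rw [← e1, h2, e2]
  -- real part of term 1
  have hT1re : (∑ i, s i * ((lam i : ℂ) ^ 2 * w i)).re
      = ∑ i, (lam i) ^ 2 * Complex.normSq (w i) := by
    rw [Complex.re_sum]
    refine Finset.sum_congr rfl fun i _ => ?_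
    have : s i * ((lam i : ℂ) ^ 2 * w i)
        = (((lam i) ^ 2 * Complex.normSq (w i) : ℝ) : ℂ) := by
      rw [hs, Pi.star_apply, mul_left_comm, hcm]
      push_cast
      ring
    rw [this, Complex.ofReal_re]
  -- lower bound on Term 2 real part
  have hT2re : (∑ i, s i * ((mu i : ℂ) * u i)).re
      ≥ -(1/2) * (∑ i, (mu i) ^ 2 * Complex.normSq (w i))
        - (1/2) * (∑ i, Complex.normSq (u i)) := by
    rw [Complex.re_sum]
    have key : ∀ i, -(((mu i) ^ 2 * Complex.normSq (w i) + Complex.normSq (u i)) / 2)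
        ≤ (s i * ((mu i : ℂ) * u i)).re := by
      intro i
      have h1 : -‖s i * ((mu i : ℂ) * u i)‖ ≤ (s i * ((mu i : ℂ) * u i)).re :=
        (abs_le.1 (Complex.abs_re_le_norm _)).1
      have h2 : ‖s i * ((mu i : ℂ) * u i)‖
          = (mu i * ‖s i‖) * ‖u i‖ := by
        rw [norm_mul, norm_mul, Complex.norm_real, Real.norm_of_nonneg (hmu i)]; ring
      have h3 := two_mul_le_add_sq (mu i * ‖s i‖) (‖u i‖)
      have h4 : (mu i * ‖s i‖) ^ 2 = (mu i) ^ 2 * Complex.normSq (w i) := by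
        rw [mul_pow, Complex.sq_norm, hs, Pi.star_apply, hns]
      have h5 : (‖u i‖) ^ 2 = Complex.normSq (u i) := Complex.sq_norm _
      nlinarith [h1, h2, h3, h4, h5]
    calc -(1/2) * (∑ i, (mu i) ^ 2 * Complex.normSq (w i))
          - (1/2) * (∑ i, Complex.normSq (u i))
        = ∑ i, -(((mu i) ^ 2 * Complex.normSq (w i) + Complex.normSq (u i)) / 2) := by
          have : ∑ i, -(((mu i) ^ 2 * Complex.normSq (w i) + Complex.normSq (u i)) / 2)
              = -(1/2) * ∑ i, ((mu i) ^ 2 * Complex.normSq (w i) + Complex.normSq (u i)) := by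
            rw [Finset.mul_sum]
            exact Finset.sum_congr rfl fun i _ => by ring
          rw [this, Finset.sum_add_distrib]
          ring
      _ ≤ ∑ i, (s i * ((mu i : ℂ) * u i)).re := Finset.sum_le_sum fun i _ => key i
  -- combine
  have hAB : (∑ i, (lam i) ^ 2 * Complex.normSq (w i))
      - (∑ i, (mu i) ^ 2 * Complex.normSq (w i)) = ρ ^ 2 * ∑ i, Complex.normSq (w i) := by
    rw [← Finset.sum_sub_distrib, Finset.mul_sum]
    refine Finset.sum_congr rfl fun i _ => ?_
    rw [← sub_mul, hrel i]
  rw [hT1, hT2, hT1re]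
  nlinarith [hnorm_u, hnorm_w, hAB, hT2re]
end
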